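/- In the example network (the path a — b — c with V_src = {a,c}, V_ld = {b}, α = 1), the payoff with the attacker's strategy fixed is neither submodular nor supermodular in the defender's strategy. Concretely: (i) with V_a = {a,c}, p({a,c},∅) = 1, p({a,c},{a}) = 0, p({a,c},{c}) = 0 and p({a,c},{a,c}) = 0, so p({a,c},{a,c}) − p({a,c},{a}) > p({a,c},{c}) − p({a,c},∅), violating submodularity of D ↦ p({a,c},D); and (ii) with V_a = {a,b,c}, p({a,b,c},∅) = 1, p({a,b,c},{a}) = 1, p({a,b,c},{b}) = 1 and p({a,b,c},{a,b}) = 0, so p({a,b,c},{a,b}) − p({a,b,c},{a}) < p({a,b,c},{b}) − p({a,b,c},∅), violating supermodularity of D ↦ p({a,b,c},D). -/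

import Mathlib

open scoped Classical

noncomputable section

variable {V : Type*} [Fintype V] [DecidableEq V]

/-- The number of shortest paths between `s` and `t` in `G` (σ_G(s,t)). -/
def numSP (G : SimpleGraph V) (s t : V) : ℕ :=
  Nat.card {w : G.Walk s t // w.length = G.dist s t}

/-- The number of shortest paths between `s` and `t` in `G` passing through edge `e`
(σ_G(s,t | e)). -/
def numSPthru (G : SimpleGraph V) (s t : V) (e : Sym2 V) : ℕ :=
  Nat.card {w : G.Walk s t // w.length = G.dist s t ∧ e ∈ w.edges}

/-- `N_G(t)`: the vertices of `Vsrc \ {t}` reachable from `t` in `G` at minimum distance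
from `t`. -/
def nearestSources (Vsrc : Finset V) (G : SimpleGraph V) (t : V) : Finset V :=
  ((Vsrc.erase t).filter (fun s => G.Reachable t s)).filter
    (fun s => ∀ s' ∈ (Vsrc.erase t).filter (fun s'' => G.Reachable t s''),
      G.dist t s ≤ G.dist t s')

/-- The load of edge `e` in `G`:
`load_G(e) = Σ_{t ∈ Vld} Σ_{s ∈ N_G(t)} σ_G(s,t|e) / (|N_G(t)|·σ_G(s,t))`. -/
def eload (Vsrc Vld : Finset V) (G : SimpleGraph V) (e : Sym2 V) : ℝ :=
  ∑ t ∈ Vld, ∑ s ∈ nearestSources Vsrc G t,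
    (numSPthru G s t e : ℝ) / (((nearestSources Vsrc G t).card : ℝ) * (numSP G s t : ℝ))

/-- The failure operator: removes every edge whose current load exceeds its capacity
`c_e = (1+α)·load_{G₀}(e)`. -/
def Fop (Vsrc Vld : Finset V) (G0 : SimpleGraph V) (α : ℝ) (G : SimpleGraph V) :
    SimpleGraph V where
  Adj u v := G.Adj u v ∧ eload Vsrc Vld G s(u, v) ≤ (1 + α) * eload Vsrc Vld G0 s(u, v)
  symm := ⟨by
    intro u v h
    refine ⟨h.1.symm, ?_⟩
    rw [Sym2.eq_swap]
    exact h.2⟩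
  loopless := ⟨fun v h => G.loopless.1 v h.1⟩

/-- `F*(G)`: the fixed point reached by iterating the failure operator (reached after at
most `|E|+1 ≤ (card V)^2` applications, since each non-trivial application removes an edge). -/
def Fstar (Vsrc Vld : Finset V) (G0 : SimpleGraph V) (α : ℝ) (G : SimpleGraph V) :
    SimpleGraph V :=
  (Fop Vsrc Vld G0 α)^[Fintype.card V ^ 2] G

/-- `G − S`: the (induced) subgraph obtained by deleting the vertices of `S`. -/
def deleteVerts (G : SimpleGraph V) (S : Finset V) : SimpleGraph V where
  Adj u v := G.Adj u v ∧ u ∉ S ∧ v ∉ S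
  symm := ⟨fun u v h => ⟨h.1.symm, h.2.2, h.2.1⟩⟩
  loopless := ⟨fun v h => G.loopless.1 v h.1⟩

/-- `disc(G)`: the number of load nodes from which no source (other than itself) is
reachable in `G`. -/
def disc (Vsrc Vld : Finset V) (G : SimpleGraph V) : ℕ :=
  (Vld.filter (fun t => ∀ s ∈ Vsrc, s ≠ t → ¬ G.Reachable t s)).card

/-- The payoff `p(V_a,V_d) = disc(F*(G₀ − (V_a \ V_d)))`. -/
def payoff (Vsrc Vld : Finset V) (G0 : SimpleGraph V) (α : ℝ) (Va Vd : Finset V) : ℕ :=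
  disc Vsrc Vld (Fstar Vsrc Vld G0 α (deleteVerts G0 (Va \ Vd)))

/-- `f` is submodular: adding an element to a larger set yields a smaller increment. -/
def IsSubmodular {β : Type*} [DecidableEq β] (f : Finset β → ℤ) : Prop :=
  ∀ ⦃S1 S2 : Finset β⦄, S1 ⊆ S2 → ∀ s ∉ S2,
    f (insert s S2) - f S2 ≤ f (insert s S1) - f S1

/-- `f` is supermodular: adding an element to a larger set yields a larger increment. -/
def IsSupermodular {β : Type*} [DecidableEq β] (f : Finset β → ℤ) : Prop :=
  ∀ ⦃S1 S2 : Finset β⦄, S1 ⊆ S2 → ∀ s ∉ S2,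
    f (insert s S1) - f S1 ≤ f (insert s S2) - f S2

/-! Removing a vertex set that meets both edges of `a — b — c` leaves no edges at all, so nothing
can fail and the load node `b` is cut off: payoff 1. Removing nothing changes nothing, and `b`
stays connected. Removing one end only, `b` sends its whole unit of demand to the other source, so
the load of the remaining edge doubles from `1/2` to `1`, which is exactly its capacity
`(1 + α) / 2` for `α = 1`: no edge fails, `b` stays connected, payoff 0. The resulting payoff
values violate both modularity inequalities. -/

open SimpleGraph

namespace SimpleGraph

variable {W : Type*} {G : SimpleGraph W} {u v : W}

theorem Walk.eq_toWalk_of_length_eq_one (h : G.Adj u v) {p : G.Walk u v} (hp : p.length = 1) :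
    p = h.toWalk := by
  cases p with
  | nil => simp at hp
  | cons _ q =>
    cases q with
    | nil => rfl
    | cons _ _ => simp at hp

theorem IsIsolated.eq_of_reachable (hu : G.IsIsolated u) (h : G.Reachable u v) : u = v := by
  obtain ⟨p⟩ := h
  cases p with
  | nil => rfl
  | cons hadj _ => exact (hu _ hadj).elim

end SimpleGraph

section ShortestPaths

variable {W : Type*} {G : SimpleGraph W} {s t : W}

theorem numSP_of_adj (h : G.Adj s t) : numSP G s t = 1 := by
  have key : ∀ w : G.Walk s t, w.length = G.dist s t ↔ w = h.toWalk := fun w => by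
    rw [dist_eq_one_iff_adj.2 h]
    exact ⟨Walk.eq_toWalk_of_length_eq_one h, fun hw => hw ▸ h.length_toWalk⟩
  simp only [numSP, key, Nat.card_unique]

theorem numSPthru_of_adj (h : G.Adj s t) (e : Sym2 W) :
    numSPthru G s t e = if e = s(s, t) then 1 else 0 := by
  have key : ∀ w : G.Walk s t, (w.length = G.dist s t ∧ e ∈ w.edges) ↔
      (w = h.toWalk ∧ e = s(s, t)) := fun w => by
    rw [dist_eq_one_iff_adj.2 h]
    constructor
    · rintro ⟨hl, he⟩
      obtain rfl := Walk.eq_toWalk_of_length_eq_one h hl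
      simpa using he
    · rintro ⟨rfl, rfl⟩
      simp
  simp only [numSPthru, key]
  split_ifs with he <;> simp [he]

theorem deleteVerts_empty (G : SimpleGraph W) : deleteVerts G ∅ = G := by
  ext u v
  simp [deleteVerts]

theorem deleteVerts_isIsolated {S : Finset W} {v : W} (hv : v ∈ S) :
    (deleteVerts G S).IsIsolated v :=
  fun _ h => h.2.1 hv

theorem deleteVerts_eq_bot {S : Finset W} (hS : ∀ u v, G.Adj u v → u ∈ S ∨ v ∈ S) :
    deleteVerts G S = ⊥ := by
  ext u v
  simp only [bot_adj, iff_false]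
  rintro ⟨hadj, hu, hv⟩
  exact (hS u v hadj).elim hu hv

end ShortestPaths

section CascadeModel

variable {G G0 : SimpleGraph V} {Vsrc Vld Va Vd : Finset V} {s t a : V} {α : ℝ}

theorem nearestSources_of_forall_adj (h : ∀ s ∈ Vsrc.erase t, G.Reachable t s → G.Adj t s) :
    nearestSources Vsrc G t = (Vsrc.erase t).filter (G.Reachable t) := by
  refine Finset.filter_true_of_mem fun s hs s' hs' => ?_
  simp only [Finset.mem_filter] at hs hs'
  rw [dist_eq_one_iff_adj.2 (h s hs.1 hs.2), dist_eq_one_iff_adj.2 (h s' hs'.1 hs'.2)]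

theorem eload_singleton_of_forall_adj (h : ∀ s ∈ Vsrc.erase t, G.Reachable t s → G.Adj t s)
    (ha : a ∈ Vsrc.erase t) (hta : G.Reachable t a) :
    eload Vsrc {t} G s(a, t) = 1 / ((Vsrc.erase t).filter (G.Reachable t)).card := by
  have hadj : ∀ s ∈ (Vsrc.erase t).filter (G.Reachable t), G.Adj s t := fun s hs =>
    (h s (Finset.mem_filter.1 hs).1 (Finset.mem_filter.1 hs).2).symm
  rw [eload, Finset.sum_singleton, nearestSources_of_forall_adj h,
    Finset.sum_eq_single_of_mem a (Finset.mem_filter.2 ⟨ha, hta⟩)]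
  · simp [numSPthru_of_adj (hadj a (Finset.mem_filter.2 ⟨ha, hta⟩)),
      numSP_of_adj (hadj a (Finset.mem_filter.2 ⟨ha, hta⟩))]
  · intro s hs hsa
    have hne : s(a, t) ≠ s(s, t) := fun he => hsa (Sym2.congr_left.1 he).symm
    simp [numSPthru_of_adj (hadj s hs), hne]

theorem eload_nonneg (Vsrc Vld : Finset V) (G : SimpleGraph V) (e : Sym2 V) :
    0 ≤ eload Vsrc Vld G e :=
  Finset.sum_nonneg fun _ _ => Finset.sum_nonneg fun _ _ => by positivity

theorem Fop_eq_self (h : ∀ u v, G.Adj u v →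
    eload Vsrc Vld G s(u, v) ≤ (1 + α) * eload Vsrc Vld G0 s(u, v)) :
    Fop Vsrc Vld G0 α G = G := by
  ext u v
  exact ⟨And.left, fun huv => ⟨huv, h u v huv⟩⟩

theorem Fop_self (hα : 0 ≤ α) : Fop Vsrc Vld G0 α G0 = G0 :=
  Fop_eq_self fun u v _ => le_mul_of_one_le_left (eload_nonneg _ _ _ _) (by linarith)

theorem Fstar_eq_self (h : Fop Vsrc Vld G0 α G = G) : Fstar Vsrc Vld G0 α G = G :=
  Function.iterate_fixed h _

theorem disc_eq_card (h : ∀ t ∈ Vld, ∀ s ∈ Vsrc, s ≠ t → ¬ G.Reachable t s) :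
    disc Vsrc Vld G = Vld.card :=
  Finset.card_filter_eq_iff.2 h

theorem disc_bot : disc Vsrc Vld (⊥ : SimpleGraph V) = Vld.card :=
  disc_eq_card fun _ _ _ _ hst hts => hst (reachable_bot.1 hts).symm

theorem disc_eq_zero (h : ∀ t ∈ Vld, ∃ s ∈ Vsrc, s ≠ t ∧ G.Reachable t s) :
    disc Vsrc Vld G = 0 := by
  rw [disc, Finset.card_eq_zero, Finset.filter_eq_empty_iff]
  intro t ht hnone
  obtain ⟨s, hs, hst, hts⟩ := h t ht
  exact hnone s hs hst hts

theorem disc_singleton_eq_zero (hs : s ∈ Vsrc) (hst : s ≠ t) (hts : G.Reachable t s) :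
    disc Vsrc {t} G = 0 :=
  disc_eq_zero fun _ ht => Finset.mem_singleton.1 ht ▸ ⟨s, hs, hst, hts⟩

theorem payoff_eq_card_of_forall_adj_mem_sdiff
    (h : ∀ u v, G0.Adj u v → u ∈ Va \ Vd ∨ v ∈ Va \ Vd) :
    payoff Vsrc Vld G0 α Va Vd = Vld.card := by
  rw [payoff, deleteVerts_eq_bot h, Fstar_eq_self (Fop_eq_self (G := ⊥) fun _ _ h => h.elim),
    disc_bot]

theorem payoff_eq_disc_of_subset (hα : 0 ≤ α) (h : Va ⊆ Vd) :
    payoff Vsrc Vld G0 α Va Vd = disc Vsrc Vld G0 := by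
  rw [payoff, Finset.sdiff_eq_empty_iff_subset.2 h, deleteVerts_empty,
    Fstar_eq_self (Fop_self hα)]

end CascadeModel

section PathExample

-- `a` and `c` range over the two ends `0`, `2` of the path `a — 1 — c`, in either order.
variable {a c : Fin 3}

theorem mem_ends_iff (ha : a ≠ 1) (hc : c ≠ 1) (hac : a ≠ c) {s : Fin 3} :
    s ∈ ({0, 2} : Finset (Fin 3)).erase 1 ↔ s = a ∨ s = c := by
  revert a c s
  decide

theorem exists_other_end (hc : c ≠ 1) : ∃ a : Fin 3, a ≠ 1 ∧ a ≠ c := by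
  revert c
  decide

theorem pathGraph_three_adj_one (ha : a ≠ 1) : (pathGraph 3).Adj 1 a := by
  rw [pathGraph_adj]
  revert a
  decide

theorem deleteVerts_pathGraph_three_adj (ha : a ≠ 1) (hc : c ≠ 1) (hac : a ≠ c)
    {u v : Fin 3} : (deleteVerts (pathGraph 3) {c}).Adj u v ↔ s(u, v) = s(a, 1) := by
  change (pathGraph 3).Adj u v ∧ u ∉ ({c} : Finset _) ∧ v ∉ ({c} : Finset _) ↔ _
  rw [pathGraph_adj]
  revert a c u v
  decide

theorem eload_pathGraph_three (ha : a ≠ 1) :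
    eload {0, 2} {1} (pathGraph 3) s(a, 1) = 1 / 2 := by
  have hends : ∀ s ∈ ({0, 2} : Finset (Fin 3)).erase 1, (pathGraph 3).Adj 1 s :=
    fun s hs => pathGraph_three_adj_one (Finset.ne_of_mem_erase hs)
  rw [eload_singleton_of_forall_adj (fun s hs _ => hends s hs) ?_ (hends a ?_).reachable,
    Finset.filter_true_of_mem fun s hs => (hends s hs).reachable]
  · rw [show (({0, 2} : Finset (Fin 3)).erase 1).card = 2 from rfl]
    norm_num
  all_goals revert a; decide

theorem reachable_deleteVerts_pathGraph_three_iff (ha : a ≠ 1) (hc : c ≠ 1) (hac : a ≠ c)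
    {s : Fin 3} (hs : s ∈ ({0, 2} : Finset (Fin 3)).erase 1) :
    (deleteVerts (pathGraph 3) {c}).Reachable 1 s ↔ s = a := by
  have hadj : (deleteVerts (pathGraph 3) {c}).Adj 1 a :=
    (deleteVerts_pathGraph_three_adj ha hc hac).2 Sym2.eq_swap
  constructor
  · intro hreach
    refine ((mem_ends_iff ha hc hac).1 hs).resolve_right fun hsc => hc ?_
    subst hsc
    exact (deleteVerts_isIsolated (Finset.mem_singleton_self s)).eq_of_reachable hreach.symm
  · rintro rfl
    exact hadj.reachable

theorem eload_deleteVerts_pathGraph_three (ha : a ≠ 1) (hc : c ≠ 1) (hac : a ≠ c) :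
    eload {0, 2} {1} (deleteVerts (pathGraph 3) {c}) s(a, 1) = 1 := by
  have hreach : ∀ s ∈ ({0, 2} : Finset (Fin 3)).erase 1,
      (deleteVerts (pathGraph 3) {c}).Reachable 1 s ↔ s = a := fun s hs =>
    reachable_deleteVerts_pathGraph_three_iff ha hc hac hs
  have ha' : a ∈ ({0, 2} : Finset (Fin 3)).erase 1 := (mem_ends_iff ha hc hac).2 (Or.inl rfl)
  have hfilter : (({0, 2} : Finset (Fin 3)).erase 1).filter
      ((deleteVerts (pathGraph 3) {c}).Reachable 1) = {a} := by
    ext s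
    simp only [Finset.mem_filter, Finset.mem_singleton]
    exact ⟨fun hs => (hreach s hs.1).1 hs.2, fun hsa => hsa ▸ ⟨ha', (hreach a ha').2 rfl⟩⟩
  rw [eload_singleton_of_forall_adj ?_ ha' ((hreach a ha').2 rfl), hfilter]
  · norm_num
  · intro s hs hs1
    rw [(hreach s hs).1 hs1]
    exact (deleteVerts_pathGraph_three_adj ha hc hac).2 Sym2.eq_swap

theorem Fop_deleteVerts_pathGraph_three (ha : a ≠ 1) (hc : c ≠ 1) (hac : a ≠ c) :
    Fop {0, 2} {1} (pathGraph 3) 1 (deleteVerts (pathGraph 3) {c}) =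
      deleteVerts (pathGraph 3) {c} := by
  refine Fop_eq_self fun u v huv => ?_
  rw [(deleteVerts_pathGraph_three_adj ha hc hac).1 huv,
    eload_deleteVerts_pathGraph_three ha hc hac, eload_pathGraph_three ha]
  norm_num

theorem disc_pathGraph_three : disc {0, 2} {1} (pathGraph 3) = 0 :=
  disc_singleton_eq_zero (s := 0) (by decide) (by decide)
    (pathGraph_three_adj_one (by decide)).reachable

theorem payoff_pathGraph_three_of_sdiff_eq_end {Va Vd : Finset (Fin 3)} (hc : c ≠ 1)
    (h : Va \ Vd = {c}) : payoff {0, 2} {1} (pathGraph 3) 1 Va Vd = 0 := by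
  obtain ⟨a, ha, hac⟩ := exists_other_end hc
  rw [payoff, h, Fstar_eq_self (Fop_deleteVerts_pathGraph_three ha hc hac)]
  exact disc_singleton_eq_zero (Finset.mem_of_mem_erase ((mem_ends_iff ha hc hac).2 (Or.inl rfl)))
    ha ((deleteVerts_pathGraph_three_adj ha hc hac).2 Sym2.eq_swap).reachable

end PathExample

/-- In the path `a — b — c` (vertices `0,1,2` of `Fin 3`) with `V_src = {a,c}`,
`V_ld = {b}` and `α = 1`, the payoff with the attacker's strategy fixed is neither
submodular nor supermodular in the defender's strategy:
(i) with `V_a = {a,c}`: `p = 1, 0, 0, 0` on defenses `∅, {a}, {c}, {a,c}`, and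
`p({a,c},{a,c}) − p({a,c},{a}) > p({a,c},{c}) − p({a,c},∅)`, violating
submodularity of `D ↦ p({a,c},D)`;
(ii) with `V_a = {a,b,c}`: `p = 1, 1, 1, 0` on defenses `∅, {a}, {b}, {a,b}`, and
`p({a,b,c},{a,b}) − p({a,b,c},{a}) < p({a,b,c},{b}) − p({a,b,c},∅)`,
violating supermodularity of `D ↦ p({a,b,c},D)`. -/
theorem path_example_defender_neither_submodular_nor_supermodular :
    payoff ({0, 2} : Finset (Fin 3)) ({1} : Finset (Fin 3)) (SimpleGraph.pathGraph 3) 1 {0, 2} ∅ = 1 ∧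
    payoff ({0, 2} : Finset (Fin 3)) ({1} : Finset (Fin 3)) (SimpleGraph.pathGraph 3) 1 {0, 2} {0} = 0 ∧
    payoff ({0, 2} : Finset (Fin 3)) ({1} : Finset (Fin 3)) (SimpleGraph.pathGraph 3) 1 {0, 2} {2} = 0 ∧
    payoff ({0, 2} : Finset (Fin 3)) ({1} : Finset (Fin 3)) (SimpleGraph.pathGraph 3) 1 {0, 2} {0, 2} = 0 ∧
    ((payoff ({0, 2} : Finset (Fin 3)) ({1} : Finset (Fin 3)) (SimpleGraph.pathGraph 3) 1 {0, 2} {2} : ℤ) - (payoff ({0, 2} : Finset (Fin 3)) ({1} : Finset (Fin 3)) (SimpleGraph.pathGraph 3) 1 {0, 2} ∅ : ℤ) <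
      (payoff ({0, 2} : Finset (Fin 3)) ({1} : Finset (Fin 3)) (SimpleGraph.pathGraph 3) 1 {0, 2} {0, 2} : ℤ) - (payoff ({0, 2} : Finset (Fin 3)) ({1} : Finset (Fin 3)) (SimpleGraph.pathGraph 3) 1 {0, 2} {0} : ℤ)) ∧
    ¬ IsSubmodular (fun Vd : Finset (Fin 3) => (payoff ({0, 2} : Finset (Fin 3)) ({1} : Finset (Fin 3)) (SimpleGraph.pathGraph 3) 1 {0, 2} Vd : ℤ)) ∧
    payoff ({0, 2} : Finset (Fin 3)) ({1} : Finset (Fin 3)) (SimpleGraph.pathGraph 3) 1 {0, 1, 2} ∅ = 1 ∧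
    payoff ({0, 2} : Finset (Fin 3)) ({1} : Finset (Fin 3)) (SimpleGraph.pathGraph 3) 1 {0, 1, 2} {0} = 1 ∧
    payoff ({0, 2} : Finset (Fin 3)) ({1} : Finset (Fin 3)) (SimpleGraph.pathGraph 3) 1 {0, 1, 2} {1} = 1 ∧
    payoff ({0, 2} : Finset (Fin 3)) ({1} : Finset (Fin 3)) (SimpleGraph.pathGraph 3) 1 {0, 1, 2} {0, 1} = 0 ∧
    ((payoff ({0, 2} : Finset (Fin 3)) ({1} : Finset (Fin 3)) (SimpleGraph.pathGraph 3) 1 {0, 1, 2} {0, 1} : ℤ) - (payoff ({0, 2} : Finset (Fin 3)) ({1} : Finset (Fin 3)) (SimpleGraph.pathGraph 3) 1 {0, 1, 2} {0} : ℤ) <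
      (payoff ({0, 2} : Finset (Fin 3)) ({1} : Finset (Fin 3)) (SimpleGraph.pathGraph 3) 1 {0, 1, 2} {1} : ℤ) - (payoff ({0, 2} : Finset (Fin 3)) ({1} : Finset (Fin 3)) (SimpleGraph.pathGraph 3) 1 {0, 1, 2} ∅ : ℤ)) ∧
    ¬ IsSupermodular (fun Vd : Finset (Fin 3) => (payoff ({0, 2} : Finset (Fin 3)) ({1} : Finset (Fin 3)) (SimpleGraph.pathGraph 3) 1 {0, 1, 2} Vd : ℤ)) := by
  set p := payoff ({0, 2} : Finset (Fin 3)) {1} (pathGraph 3) 1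
  have hA₀ : p {0, 2} ∅ = 1 :=
    payoff_eq_card_of_forall_adj_mem_sdiff (by simp only [pathGraph_adj]; decide)
  have hA₁ : p {0, 2} {0} = 0 := payoff_pathGraph_three_of_sdiff_eq_end (c := 2) (by decide) rfl
  have hA₂ : p {0, 2} {2} = 0 := payoff_pathGraph_three_of_sdiff_eq_end (c := 0) (by decide) rfl
  have hA₃ : p {0, 2} {0, 2} = 0 :=
    (payoff_eq_disc_of_subset zero_le_one subset_rfl).trans disc_pathGraph_three
  have hB₀ : p {0, 1, 2} ∅ = 1 :=
    payoff_eq_card_of_forall_adj_mem_sdiff (by simp only [pathGraph_adj]; decide)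
  have hB₁ : p {0, 1, 2} {0} = 1 :=
    payoff_eq_card_of_forall_adj_mem_sdiff (by simp only [pathGraph_adj]; decide)
  have hB₂ : p {0, 1, 2} {1} = 1 :=
    payoff_eq_card_of_forall_adj_mem_sdiff (by simp only [pathGraph_adj]; decide)
  have hB₃ : p {0, 1, 2} {0, 1} = 0 :=
    payoff_pathGraph_three_of_sdiff_eq_end (c := 2) (by decide) rfl
  have hA : (p {0, 2} {2} : ℤ) - p {0, 2} ∅ < (p {0, 2} {0, 2} : ℤ) - p {0, 2} {0} := by
    rw [hA₀, hA₁, hA₂, hA₃]; decide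
  have hB : (p {0, 1, 2} {0, 1} : ℤ) - p {0, 1, 2} {0} < (p {0, 1, 2} {1} : ℤ) - p {0, 1, 2} ∅ := by
    rw [hB₀, hB₁, hB₂, hB₃]; decide
  refine ⟨hA₀, hA₁, hA₂, hA₃, hA, fun hf => ?_, hB₀, hB₁, hB₂, hB₃, hB, fun hf => ?_⟩
  · exact (hf (Finset.empty_subset {0}) 2 (by decide)).not_gt
      (by rwa [Finset.pair_comm (2 : Fin 3) 0])
  · exact (hf (Finset.empty_subset {0}) 1 (by decide)).not_gt
      (by rwa [Finset.pair_comm (1 : Fin 3) 0])
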